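/- With the block-diagonal graphon of the previous statement and constraint ∫₀¹ θ = 1/2: there exists a measurable θ : [0,1] → {0,1} with ∫₀¹ θ = 1/2 and J(θ) = 8 Σ_k A_k(λ_k − A_k) = 0 if and only if there exists a subset K ⊆ {1,…,N} with Σ_{k∈K} λ_k = 1/2. -/

import Mathlib

open MeasureTheory Set Finset

/-! A `{0,1}`-valued `θ` is the indicator of a measurable set `S`, so `A_k = |S ∩ C_k|` lies in
`[0, λ_k]` and every term `A_k (λ_k - A_k)` of `J` is nonnegative. Hence `J(θ) = 0` forces
`A_k ∈ {0, λ_k}`, and `K = {k | A_k ≠ 0}` has `∑_{k ∈ K} λ_k = ∑_k A_k = |S ∩ [0,1]| = 1/2`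
because the blocks tile `[0,1]` up to null overlaps. Conversely, the indicator of
`⋃_{k ∈ K} C_k` has `A_k ∈ {0, λ_k}` and total mass `∑_{k ∈ K} λ_k`. -/

open Function

section

variable {α : Type*} [MeasurableSpace α] {μ : Measure α}

lemma exists_measurableSet_eq_indicator_one {θ : α → ℝ} (hθ : Measurable θ)
    (h01 : ∀ x, θ x = 0 ∨ θ x = 1) : ∃ S, MeasurableSet S ∧ θ = S.indicator 1 := by
  refine ⟨θ ⁻¹' {1}, hθ (measurableSet_singleton 1), funext fun x => ?_⟩
  rcases h01 x with hx | hx <;> simp [hx]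

lemma setIntegral_indicator_one {S : Set α} (hS : MeasurableSet S) (B : Set α) :
    ∫ x in B, S.indicator 1 x ∂μ = μ.real (S ∩ B) := by
  rw [integral_indicator_one hS, measureReal_def, Measure.restrict_apply hS, ← measureReal_def]

lemma measureReal_biUnion_inter_of_pairwise_aedisjoint {ι : Type*} [DecidableEq ι]
    {s : ι → Set α} (hd : Pairwise (AEDisjoint μ on s)) (K : Finset ι) (j : ι) :
    μ.real ((⋃ k ∈ K, s k) ∩ s j) = if j ∈ K then μ.real (s j) else 0 := by
  split_ifs with hj
  · rw [inter_eq_right.2 (subset_set_biUnion_of_mem hj)]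
  · have hnull : μ ((⋃ k ∈ K, s k) ∩ s j) = 0 := by
      rw [iUnion₂_inter]
      exact (measure_biUnion_null_iff K.countable_toSet).2 fun k hk =>
        hd (ne_of_mem_of_not_mem hk hj)
    rw [measureReal_def, hnull, ENNReal.toReal_zero]

end

lemma sum_filter_ne_zero_eq_sum_of_sum_mul_sub_eq_zero {ι : Type*} [Fintype ι] {a b : ι → ℝ}
    (ha : ∀ k, 0 ≤ a k) (hab : ∀ k, a k ≤ b k) (h : ∑ k, a k * (b k - a k) = 0) :
    ∑ k ∈ univ.filter (fun k => a k ≠ 0), b k = ∑ k, a k := by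
  have hterm := (sum_eq_zero_iff_of_nonneg fun k _ =>
    mul_nonneg (ha k) (sub_nonneg.2 (hab k))).1 h
  rw [← sum_filter_ne_zero univ]
  refine sum_congr rfl fun k hk => ?_
  rcases mul_eq_zero.1 (hterm k (mem_univ k)) with h0 | h0
  · exact absurd h0 (mem_filter.1 hk).2
  · exact sub_eq_zero.1 h0

lemma sum_filter_le_eq_sum_filter_lt_add {ι M : Type*} [Fintype ι] [LinearOrder ι]
    [AddCommMonoid M] (f : ι → M) (k : ι) :
    ∑ h ∈ univ.filter (fun h => h ≤ k), f h = ∑ h ∈ univ.filter (fun h => h < k), f h + f k := by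
  rw [add_comm, ← sum_insert (by simp)]
  congr 1
  ext h
  simp [le_iff_lt_or_eq, or_comm]

lemma sum_filter_le_le_sum_filter_lt {ι M : Type*} [Fintype ι] [LinearOrder ι]
    [AddCommMonoid M] [PartialOrder M] [IsOrderedAddMonoid M] {f : ι → M} (hf : ∀ i, 0 ≤ f i)
    {j k : ι} (hjk : j < k) :
    ∑ h ∈ univ.filter (fun h => h ≤ j), f h ≤ ∑ h ∈ univ.filter (fun h => h < k), f h :=
  sum_le_sum_of_subset_of_nonneg (monotone_filter_right _ fun _ _ hh => hh.trans_lt hjk)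
    fun h _ _ => hf h

def block {N : ℕ} (lam : Fin N → ℝ) (k : Fin N) : Set ℝ :=
  Icc (∑ h ∈ univ.filter (fun h => h < k), lam h) (∑ h ∈ univ.filter (fun h => h ≤ k), lam h)

namespace block

variable {N : ℕ} {lam : Fin N → ℝ}

lemma measurableSet (k : Fin N) : MeasurableSet (block lam k) := measurableSet_Icc

lemma volume_eq (k : Fin N) : volume (block lam k) = ENNReal.ofReal (lam k) := by
  rw [block, Real.volume_Icc, sum_filter_le_eq_sum_filter_lt_add, add_sub_cancel_left]

lemma volume_ne_top (k : Fin N) : volume (block lam k) ≠ ⊤ := by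
  rw [volume_eq]
  exact ENNReal.ofReal_ne_top

lemma volume_real_eq (hlam : ∀ k, 0 ≤ lam k) (k : Fin N) : volume.real (block lam k) = lam k := by
  rw [measureReal_def, volume_eq, ENNReal.toReal_ofReal (hlam k)]

lemma subset_Icc (hlam : ∀ k, 0 ≤ lam k) (hsum : ∑ k, lam k = 1) (k : Fin N) :
    block lam k ⊆ Icc 0 1 :=
  Icc_subset_Icc (sum_nonneg fun h _ => hlam h)
    (hsum ▸ sum_le_univ_sum_of_nonneg fun h => hlam h)

lemma pairwise_aedisjoint (hlam : ∀ k, 0 ≤ lam k) :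
    Pairwise (AEDisjoint volume on block lam) := by
  have key : ∀ {j k : Fin N}, j < k → AEDisjoint volume (block lam j) (block lam k) := by
    intro j k hjk
    refine measure_mono_null (fun x hx => ?_)
      (Real.volume_singleton (a := ∑ h ∈ univ.filter (fun h => h ≤ j), lam h))
    exact le_antisymm hx.1.2 ((sum_filter_le_le_sum_filter_lt hlam hjk).trans hx.2.1)
  intro j k hjk
  rcases hjk.lt_or_gt with h | h
  · exact key h
  · exact (key h).symm

/-- No ordering argument is needed: the union lies in `[0,1]` and has measure `∑ λ_k = 1`. -/
lemma iUnion_ae_eq_Icc (hlam : ∀ k, 0 ≤ lam k) (hsum : ∑ k, lam k = 1) :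
    (⋃ k, block lam k) =ᵐ[volume] Icc (0 : ℝ) 1 := by
  refine ae_eq_of_subset_of_measure_ge (iUnion_subset (subset_Icc hlam hsum)) ?_
    (MeasurableSet.iUnion measurableSet).nullMeasurableSet (by simp)
  rw [measure_iUnion₀ (pairwise_aedisjoint hlam) fun k => (measurableSet k).nullMeasurableSet,
    tsum_fintype]
  simp_rw [volume_eq, Real.volume_Icc, ← ENNReal.ofReal_sum_of_nonneg fun k _ => hlam k, hsum,
    sub_zero, le_rfl]

lemma measureReal_inter_Icc_eq_sum (hlam : ∀ k, 0 ≤ lam k) (hsum : ∑ k, lam k = 1)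
    {S : Set ℝ} (hS : MeasurableSet S) :
    volume.real (S ∩ Icc 0 1) = ∑ k, volume.real (S ∩ block lam k) := by
  rw [← measureReal_congr ((ae_eq_refl S).inter (iUnion_ae_eq_Icc hlam hsum)), inter_iUnion,
    measureReal_def, measure_iUnion₀ ?_ fun k => (hS.inter (measurableSet k)).nullMeasurableSet,
    tsum_fintype, ENNReal.toReal_sum fun k _ =>
      measure_ne_top_of_subset inter_subset_right (volume_ne_top k)]
  · rfl
  · exact (pairwise_aedisjoint hlam).mono fun j k h => h.mono inter_subset_right inter_subset_right

end block

theorem stmt_12 (N : ℕ) (lam : Fin N → ℝ) (hpos : ∀ k, 0 < lam k)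
    (hsum : ∑ k, lam k = 1)
    (C : Fin N → Set ℝ)
    (hC : ∀ k, C k = Set.Icc (∑ h ∈ Finset.univ.filter (fun h => h < k), lam h)
                            (∑ h ∈ Finset.univ.filter (fun h => h ≤ k), lam h)) :
    (∃ θ : ℝ → ℝ, Measurable θ ∧ (∀ x, θ x = 0 ∨ θ x = 1) ∧
        (∫ x in Set.Icc (0:ℝ) 1, θ x) = 1/2 ∧
        8 * ∑ k, (∫ x in C k, θ x) * (lam k - ∫ x in C k, θ x) = 0) ↔
      ∃ K : Finset (Fin N), ∑ k ∈ K, lam k = 1/2 := by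
  obtain rfl : C = block lam := funext hC
  have hlam : ∀ k, 0 ≤ lam k := fun k => (hpos k).le
  constructor
  · rintro ⟨θ, hθ, h01, hhalf, hJ⟩
    obtain ⟨S, hS, rfl⟩ := exists_measurableSet_eq_indicator_one hθ h01
    simp only [setIntegral_indicator_one hS] at hhalf hJ
    refine ⟨univ.filter fun k => volume.real (S ∩ block lam k) ≠ 0, ?_⟩
    rw [sum_filter_ne_zero_eq_sum_of_sum_mul_sub_eq_zero (fun k => measureReal_nonneg)
      (fun k => (measureReal_mono inter_subset_right (block.volume_ne_top k)).trans_eq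
        (block.volume_real_eq hlam k)) (by linarith),
      ← block.measureReal_inter_Icc_eq_sum hlam hsum hS, hhalf]
  · rintro ⟨K, hK⟩
    set U := ⋃ k ∈ K, block lam k
    have hU : MeasurableSet U := K.measurableSet_biUnion fun k _ => block.measurableSet k
    have hA : ∀ j, volume.real (U ∩ block lam j) = if j ∈ K then lam j else 0 := fun j => by
      rw [measureReal_biUnion_inter_of_pairwise_aedisjoint (block.pairwise_aedisjoint hlam),
        block.volume_real_eq hlam]
    refine ⟨U.indicator 1, measurable_one.indicator hU, fun x => ?_, ?_, ?_⟩
    · by_cases hx : x ∈ U <;> simp [hx]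
    · rw [setIntegral_indicator_one hU, block.measureReal_inter_Icc_eq_sum hlam hsum hU]
      simp only [hA, sum_ite_mem, Finset.univ_inter, hK]
    · simp only [setIntegral_indicator_one hU, hA]
      exact mul_eq_zero_of_right _ (sum_eq_zero fun k _ => by split_ifs <;> simp)
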